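/- Kepler's third law for the Kepler-Heisenberg system: if c : ℝ → ℝ⁶ is a T-periodic solution with size a = sup over one period of Q(c(t))^(1/4), then for every λ > 0 the dilated curve c_λ(t) = D_λ(c(t/λ²)) is a (λ²T)-periodic solution with size λ·a; consequently the ratio (period)²/(size)⁴ is the same for c_λ as for c. -/

import Mathlib

/-- `P_X = p_x - (1/2) y p_z`, where phase space coordinates are
`(x, y, z, p_x, p_y, p_z) = (p 0, p 1, p 2, p 3, p 4, p 5)`. -/
noncomputable def PX (p : Fin 6 → ℝ) : ℝ := p 3 - (1/2) * p 1 * p 5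

/-- `P_Y = p_y + (1/2) x p_z`. -/
noncomputable def PY (p : Fin 6 → ℝ) : ℝ := p 4 + (1/2) * p 0 * p 5

/-- `Q = (x² + y²)² + 16 z²`. -/
noncomputable def Qf (p : Fin 6 → ℝ) : ℝ := ((p 0)^2 + (p 1)^2)^2 + 16 * (p 2)^2

/-- The Kepler–Heisenberg Hamiltonian `H = (1/2)(P_X² + P_Y²) - (1/(8π)) Q^{-1/2}`. -/
noncomputable def Ham (p : Fin 6 → ℝ) : ℝ :=
  (1/2) * ((PX p)^2 + (PY p)^2) - (1/(8*Real.pi)) * (Qf p) ^ (-(1/2) : ℝ)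

/-- A solution of the Kepler–Heisenberg system: a differentiable curve on an open
interval (open preconnected set) `I`, whose position component never vanishes, and
which satisfies Hamilton's equations for `Ham`. -/
def IsSolutionOn (c : ℝ → Fin 6 → ℝ) (I : Set ℝ) : Prop :=
  IsOpen I ∧ IsPreconnected I ∧
  ∀ t ∈ I,
    (¬ (c t 0 = 0 ∧ c t 1 = 0 ∧ c t 2 = 0)) ∧
    HasDerivAt (fun τ => c τ 0) (fderiv ℝ Ham (c t) (Pi.single 3 1)) t ∧
    HasDerivAt (fun τ => c τ 1) (fderiv ℝ Ham (c t) (Pi.single 4 1)) t ∧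
    HasDerivAt (fun τ => c τ 2) (fderiv ℝ Ham (c t) (Pi.single 5 1)) t ∧
    HasDerivAt (fun τ => c τ 3) (-(fderiv ℝ Ham (c t) (Pi.single 0 1))) t ∧
    HasDerivAt (fun τ => c τ 4) (-(fderiv ℝ Ham (c t) (Pi.single 1 1))) t ∧
    HasDerivAt (fun τ => c τ 5) (-(fderiv ℝ Ham (c t) (Pi.single 2 1))) t
/-- The Heisenberg dilation `D_λ` on phase space. -/
noncomputable def Dil (l : ℝ) (p : Fin 6 → ℝ) : Fin 6 → ℝ :=
  ![l * p 0, l * p 1, l^2 * p 2, l⁻¹ * p 3, l⁻¹ * p 4, (l^2)⁻¹ * p 5]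

/-- The rotation `R_φ` about the `z`-axis on phase space. -/
noncomputable def Rot (φ : ℝ) (p : Fin 6 → ℝ) : Fin 6 → ℝ :=
  ![p 0 * Real.cos φ - p 1 * Real.sin φ, p 0 * Real.sin φ + p 1 * Real.cos φ, p 2,
    p 3 * Real.cos φ - p 4 * Real.sin φ, p 3 * Real.sin φ + p 4 * Real.cos φ, p 5]

/-!
`D_λ` is linear and scales the Hamiltonian homogeneously, `H ∘ D_λ = λ⁻² H`, because `P_X, P_Y`
have weight `-1` and `Q^{-1/2}` has weight `-2`. It scales each conjugate pair `(q_k, p_k)` by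
reciprocal factors, so by the chain rule `D_λ` maps Hamilton's vector field to `λ⁻²` times itself,
which the time change `t ↦ t / λ²` absorbs. Since `Q ∘ D_λ = λ⁴ Q`, the size scales by `λ`.
-/

open Set Pointwise

noncomputable def dilWeight (l : ℝ) : Fin 6 → ℝ := ![l, l, l^2, l⁻¹, l⁻¹, (l^2)⁻¹]

lemma Dil_apply (l : ℝ) (p : Fin 6 → ℝ) (i : Fin 6) : Dil l p i = dilWeight l i * p i := by
  fin_cases i <;> rfl

-- In `Fin 6`, `k + 3` is the coordinate conjugate to `k`.
lemma dilWeight_mul_dilWeight_add_three {l : ℝ} (hl : l ≠ 0) (k : Fin 6) :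
    dilWeight l k * dilWeight l (k + 3) = 1 := by
  fin_cases k <;> simp [dilWeight, hl]

noncomputable def dilCLM (l : ℝ) : (Fin 6 → ℝ) →L[ℝ] (Fin 6 → ℝ) :=
  ContinuousLinearMap.pi fun i => dilWeight l i • ContinuousLinearMap.proj i

lemma dilCLM_apply (l : ℝ) (p : Fin 6 → ℝ) : dilCLM l p = Dil l p := by
  funext i
  simp [dilCLM, Dil_apply]

lemma Dil_single (l : ℝ) (i : Fin 6) (a : ℝ) :
    Dil l (Pi.single i a) = Pi.single i (dilWeight l i * a) := by
  funext j
  rcases eq_or_ne j i with rfl | hji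
  · simp [Dil_apply]
  · simp [Dil_apply, hji]

lemma Qf_eq_zero_iff (p : Fin 6 → ℝ) : Qf p = 0 ↔ p 0 = 0 ∧ p 1 = 0 ∧ p 2 = 0 := by
  rw [Qf, add_eq_zero_iff_of_nonneg (by positivity) (by positivity), pow_eq_zero_iff two_ne_zero,
    add_eq_zero_iff_of_nonneg (by positivity) (by positivity)]
  simp [and_assoc]

lemma Qf_nonneg (p : Fin 6 → ℝ) : 0 ≤ Qf p := by
  unfold Qf; positivity

lemma Qf_Dil (l : ℝ) (p : Fin 6 → ℝ) : Qf (Dil l p) = l^4 * Qf p := by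
  simp only [Qf, Dil, Matrix.cons_val_zero, Matrix.cons_val_one, Matrix.cons_val]
  ring

lemma Qf_Dil_rpow_quarter {l : ℝ} (hl : 0 ≤ l) (p : Fin 6 → ℝ) :
    Qf (Dil l p) ^ ((1:ℝ)/4) = l * Qf p ^ ((1:ℝ)/4) := by
  rw [Qf_Dil, Real.mul_rpow (by positivity) (Qf_nonneg p), ← Real.rpow_natCast,
    ← Real.rpow_mul hl]
  norm_num

lemma Qf_Dil_rpow_neg_half {l : ℝ} (hl : 0 ≤ l) (p : Fin 6 → ℝ) :
    Qf (Dil l p) ^ (-(1/2) : ℝ) = (l^2)⁻¹ * Qf p ^ (-(1/2) : ℝ) := by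
  rw [Qf_Dil, Real.mul_rpow (by positivity) (Qf_nonneg p), ← Real.rpow_natCast,
    ← Real.rpow_mul hl, ← Real.rpow_natCast, ← Real.rpow_neg_one, ← Real.rpow_mul hl]
  norm_num

lemma Ham_Dil {l : ℝ} (hl : 0 < l) (p : Fin 6 → ℝ) : Ham (Dil l p) = (l^2)⁻¹ * Ham p := by
  have hPX : PX (Dil l p) = l⁻¹ * PX p := by
    simp only [PX, Dil, Matrix.cons_val_zero, Matrix.cons_val_one, Matrix.cons_val]
    field_simp
  have hPY : PY (Dil l p) = l⁻¹ * PY p := by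
    simp only [PY, Dil, Matrix.cons_val_zero, Matrix.cons_val]
    field_simp
  rw [Ham, hPX, hPY, Qf_Dil_rpow_neg_half hl.le, Ham]
  ring

lemma differentiableAt_Ham {p : Fin 6 → ℝ} (hp : Qf p ≠ 0) : DifferentiableAt ℝ Ham p := by
  have hQ : DifferentiableAt ℝ Qf p := by unfold Qf; fun_prop
  unfold Ham PX PY
  exact (by fun_prop : DifferentiableAt ℝ _ p).sub
    ((hQ.rpow_const (Or.inl hp)).const_mul _)

theorem fderiv_apply_map_of_comp_eq_mul {𝕜 E : Type*} [NontriviallyNormedField 𝕜]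
    [NormedAddCommGroup E] [NormedSpace 𝕜 E] {f : E → 𝕜} {L : E →L[𝕜] E} {μ : 𝕜} (hμ : μ ≠ 0)
    (hfL : ∀ x, f (L x) = μ * f x) {x : E}
    (hf : DifferentiableAt 𝕜 f (L x)) (v : E) :
    fderiv 𝕜 f (L x) (L v) = μ * fderiv 𝕜 f x v := by
  have hcomp : HasFDerivAt (fun y => μ⁻¹ * f (L y)) (μ⁻¹ • (fderiv 𝕜 f (L x)).comp L) x :=
    (hf.hasFDerivAt.comp x L.hasFDerivAt).const_mul μ⁻¹
  have hf_eq : (fun y => μ⁻¹ * f (L y)) = f := by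
    funext y
    rw [hfL, inv_mul_cancel_left₀ hμ]
  rw [hf_eq] at hcomp
  simp [hcomp.fderiv, hμ]

lemma fderiv_Ham_Dil_single {l : ℝ} (hl : 0 < l) {p : Fin 6 → ℝ} (hp : Qf p ≠ 0) (i : Fin 6) :
    fderiv ℝ Ham (Dil l p) (Pi.single i 1)
      = (l^2)⁻¹ * (dilWeight l i)⁻¹ * fderiv ℝ Ham p (Pi.single i 1) := by
  have hw : dilWeight l i ≠ 0 := by
    fin_cases i <;> simp [dilWeight, hl.ne']
  have hdiff : DifferentiableAt ℝ Ham (dilCLM l p) := by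
    rw [dilCLM_apply]
    exact differentiableAt_Ham (by rw [Qf_Dil]; positivity)
  have hsingle :
      (Pi.single i (dilWeight l i)⁻¹ : Fin 6 → ℝ) = (dilWeight l i)⁻¹ • Pi.single i 1 := by
    simpa using Pi.single_smul' i (dilWeight l i)⁻¹ (1 : ℝ)
  calc fderiv ℝ Ham (Dil l p) (Pi.single i 1)
      = fderiv ℝ Ham (dilCLM l p) (dilCLM l (Pi.single i (dilWeight l i)⁻¹)) := by
        rw [dilCLM_apply, dilCLM_apply, Dil_single, mul_inv_cancel₀ hw]
    _ = (l^2)⁻¹ * fderiv ℝ Ham p (Pi.single i (dilWeight l i)⁻¹) :=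
        fderiv_apply_map_of_comp_eq_mul (by positivity)
          (fun q => by rw [dilCLM_apply, Ham_Dil hl]) hdiff _
    _ = (l^2)⁻¹ * (dilWeight l i)⁻¹ * fderiv ℝ Ham p (Pi.single i 1) := by
        rw [hsingle, map_smul, smul_eq_mul, mul_assoc]

lemma hasDerivAt_Dil_comp_div {c : ℝ → Fin 6 → ℝ} {l t σ : ℝ} (hl : 0 < l) {i j : Fin 6}
    (hij : j = i + 3) (hQ : Qf (c (t / l^2)) ≠ 0)
    (h : HasDerivAt (fun τ => c τ i) (σ * fderiv ℝ Ham (c (t / l^2)) (Pi.single j 1)) (t / l^2)) :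
    HasDerivAt (fun τ => Dil l (c (τ / l^2)) i)
      (σ * fderiv ℝ Ham (Dil l (c (t / l^2))) (Pi.single j 1)) t := by
  have hw : dilWeight l i = (dilWeight l j)⁻¹ :=
    eq_inv_of_mul_eq_one_left (hij ▸ dilWeight_mul_dilWeight_add_three hl.ne' i)
  simp only [Dil_apply]
  refine ((h.comp t ((hasDerivAt_id t).div_const (l^2))).const_mul (dilWeight l i)).congr_deriv ?_
  rw [fderiv_Ham_Dil_single hl hQ, hw]
  ring

theorem IsSolutionOn.comp_Dil {c : ℝ → Fin 6 → ℝ} {I : Set ℝ} (hc : IsSolutionOn c I)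
    {l : ℝ} (hl : 0 < l) : IsSolutionOn (fun t => Dil l (c (t / l^2))) ((l^2) • I) := by
  obtain ⟨hopen, hconn, hsol⟩ := hc
  have hl2 : (l^2 : ℝ) ≠ 0 := by positivity
  refine ⟨hopen.smul₀ hl2, hconn.image _ (continuous_const_smul _).continuousOn, fun t ht => ?_⟩
  rw [mem_smul_set_iff_inv_smul_mem₀ hl2, smul_eq_mul, inv_mul_eq_div] at ht
  obtain ⟨hpos, h0, h1, h2, h3, h4, h5⟩ := hsol (t / l^2) ht
  have hQ : Qf (c (t / l^2)) ≠ 0 := (Qf_eq_zero_iff _).not.2 hpos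
  refine ⟨?_, ?_, ?_, ?_, ?_, ?_, ?_⟩
  · rw [← Qf_eq_zero_iff, Qf_Dil]
    exact mul_ne_zero (by positivity) hQ
  · simpa only [one_mul] using hasDerivAt_Dil_comp_div (σ := 1) (j := 3) hl rfl hQ
      (by simpa only [one_mul] using h0)
  · simpa only [one_mul] using hasDerivAt_Dil_comp_div (σ := 1) (j := 4) hl rfl hQ
      (by simpa only [one_mul] using h1)
  · simpa only [one_mul] using hasDerivAt_Dil_comp_div (σ := 1) (j := 5) hl rfl hQ
      (by simpa only [one_mul] using h2)
  · simpa only [neg_one_mul] using hasDerivAt_Dil_comp_div (σ := -1) (j := 0) hl rfl hQ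
      (by simpa only [neg_one_mul] using h3)
  · simpa only [neg_one_mul] using hasDerivAt_Dil_comp_div (σ := -1) (j := 1) hl rfl hQ
      (by simpa only [neg_one_mul] using h4)
  · simpa only [neg_one_mul] using hasDerivAt_Dil_comp_div (σ := -1) (j := 2) hl rfl hQ
      (by simpa only [neg_one_mul] using h5)

lemma sSup_image_mul_comp_div_Icc (g : ℝ → ℝ) {k l T : ℝ} (hk : 0 < k) (hl : 0 ≤ l) :
    sSup ((fun t => l * g (t / k)) '' Icc 0 (k * T)) = l * sSup (g '' Icc 0 T) := by
  have hdiv : (fun t => t / k) '' Icc 0 (k * T) = Icc 0 T := by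
    simp_rw [div_eq_mul_inv]
    rw [image_mul_right_Icc' _ _ (inv_pos.2 hk), zero_mul, mul_comm k, mul_inv_cancel_right₀ hk.ne']
  have himg : (fun t => l * g (t / k)) '' Icc 0 (k * T) = l • (g '' Icc 0 T) := by
    rw [← hdiv, ← image_smul, image_image, image_image]
    rfl
  rw [himg, Real.sSup_smul_of_nonneg hl, smul_eq_mul]

theorem kh_third_law_general (c : ℝ → Fin 6 → ℝ) (T a : ℝ)
    (hc : IsSolutionOn c Set.univ) (hper : ∀ t, c (t + T) = c t)
    (ha : a = sSup ((fun t => (Qf (c t)) ^ ((1:ℝ)/4)) '' Set.Icc 0 T))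
    (l : ℝ) (hl : 0 < l) :
    IsSolutionOn (fun t => Dil l (c (t / l^2))) Set.univ ∧
    (∀ t, Dil l (c ((t + l^2 * T) / l^2)) = Dil l (c (t / l^2))) ∧
    sSup ((fun t => (Qf (Dil l (c (t / l^2)))) ^ ((1:ℝ)/4)) '' Set.Icc 0 (l^2 * T))
      = l * a ∧
    (l^2 * T)^2 / (l * a)^4 = T^2 / a^4 := by
  have hl2 : (l^2 : ℝ) ≠ 0 := by positivity
  refine ⟨?_, fun t => ?_, ?_, ?_⟩
  · simpa only [Set.smul_set_univ₀ hl2] using hc.comp_Dil hl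
  · rw [add_div, mul_div_cancel_left₀ T hl2, hper]
  · simp_rw [Qf_Dil_rpow_quarter hl.le]
    rw [sSup_image_mul_comp_div_Icc (fun s => Qf (c s) ^ ((1:ℝ)/4)) (by positivity) hl.le, ha]
  · rw [mul_pow, mul_pow, ← pow_mul, mul_div_mul_left _ _ (by positivity)]

/-- Kepler's third law for the Kepler–Heisenberg system: if `c` is a `T`-periodic solution
with size `a = sup {Q(c(t))^(1/4) : t ∈ [0, T]}`, then for every `λ > 0` the dilated curve
`c_λ(t) = D_λ(c(t/λ²))` is a `λ²T`-periodic solution with size `λ a`; consequently the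
ratio `(period)²/(size)⁴` is the same for `c_λ` as for `c`. -/
theorem kh_third_law (c : ℝ → Fin 6 → ℝ) (T a : ℝ) (hT : 0 < T)
    (hc : IsSolutionOn c Set.univ) (hper : ∀ t, c (t + T) = c t)
    (ha : a = sSup ((fun t => (Qf (c t)) ^ ((1:ℝ)/4)) '' Set.Icc 0 T))
    (l : ℝ) (hl : 0 < l) :
    IsSolutionOn (fun t => Dil l (c (t / l^2))) Set.univ ∧
    (∀ t, Dil l (c ((t + l^2 * T) / l^2)) = Dil l (c (t / l^2))) ∧
    sSup ((fun t => (Qf (Dil l (c (t / l^2)))) ^ ((1:ℝ)/4)) '' Set.Icc 0 (l^2 * T))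
      = l * a ∧
    (l^2 * T)^2 / (l * a)^4 = T^2 / a^4 :=
  kh_third_law_general c T a hc hper ha l hl
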